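/- arXiv:2309.13551 — 4 statements merged into one kernel-verified Lean document; each statement's English description precedes it below -/
import Mathlib

section
/- If an integer N can be written as N = x² − xy + y² for integers x, y, and p is a prime with p ≡ 2 (mod 3), then the exponent of p in the prime factorization of N is even. -/
/-!
Modulo a prime `p ≡ 2 (mod 3)` the form `a² - ab + b²` has no nontrivial zero: a zero with
`b ≠ 0` makes `-a/b` a primitive cube root of unity, whose order `3` would divide `p - 1`.
Hence after pulling out `g = gcd(x, y)`, so that `N = g² (x'² - x'y' + y'²)` with `x', y'`
coprime, the second factor is prime to `p` and `v_p(N) = 2 v_p(g)`.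
-/

theorem ZMod.eq_zero_of_sq_sub_mul_add_sq_eq_zero {p : ℕ} [hp : Fact p.Prime] (hp3 : p % 3 = 2)
    {a b : ZMod p} (h : a ^ 2 - a * b + b ^ 2 = 0) : b = 0 := by
  by_contra hb
  set ω := -(a / b)
  have hω : ω ^ 2 + ω + 1 = 0 := by
    simp only [ω]
    field_simp
    linear_combination h
  have hω_ne_one : ω ≠ 1 := by
    intro h1
    have h3 : ((3 : ℕ) : ZMod p) = 0 := by
      rw [h1] at hω
      exact_mod_cast (by linear_combination hω : (3 : ZMod p) = 0)
    have := (Nat.prime_dvd_prime_iff_eq hp.out Nat.prime_three).1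
      ((ZMod.natCast_eq_zero_iff 3 p).1 h3)
    omega
  have hω_ne_zero : ω ≠ 0 := by
    intro h0
    simp [h0] at hω
  have horder : orderOf ω = 3 :=
    orderOf_eq_prime (by linear_combination (ω - 1) * hω) hω_ne_one
  have := horder ▸ ZMod.orderOf_dvd_card_sub_one hω_ne_zero
  omega

theorem Int.not_dvd_sq_sub_mul_add_sq_of_gcd_eq_one {p : ℕ} [hp : Fact p.Prime]
    (hp3 : p % 3 = 2) {x y : ℤ} (hxy : x.gcd y = 1) : ¬ (p : ℤ) ∣ x ^ 2 - x * y + y ^ 2 := by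
  intro h
  have hform : ((x : ZMod p)) ^ 2 - x * y + (y : ZMod p) ^ 2 = 0 := by
    exact_mod_cast (ZMod.intCast_zmod_eq_zero_iff_dvd _ p).2 h
  have hy := ZMod.eq_zero_of_sq_sub_mul_add_sq_eq_zero hp3 hform
  have hx := ZMod.eq_zero_of_sq_sub_mul_add_sq_eq_zero hp3 (a := (y : ZMod p)) (b := x)
    (by linear_combination hform)
  rw [ZMod.intCast_zmod_eq_zero_iff_dvd] at hx hy
  have := Int.dvd_gcd hx hy
  rw [hxy, Nat.dvd_one] at this
  exact hp.out.ne_one this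

theorem stmt_3_general (N : ℤ) (x y : ℤ) (hN : N = x ^ 2 - x * y + y ^ 2)
    (p : ℕ) (hp : p.Prime) (hp3 : p % 3 = 2) :
    Even (padicValInt p N) := by
  have := Fact.mk hp
  obtain rfl | hN0 := eq_or_ne N 0
  · simp
  have hxy : x ≠ 0 ∨ y ≠ 0 := by
    by_contra! h
    simp [h, hN] at hN0
  obtain ⟨g, x', y', -, hcop, rfl, rfl⟩ := Int.exists_gcd_one' (Int.gcd_pos_iff.2 hxy)
  have hfactor : N = ((g ^ 2 : ℕ) : ℤ) * (x' ^ 2 - x' * y' + y' ^ 2) := by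
    rw [hN]
    push_cast
    ring
  rw [hfactor] at hN0 ⊢
  rw [padicValInt.mul (left_ne_zero_of_mul hN0) (right_ne_zero_of_mul hN0),
    padicValInt.eq_zero_of_not_dvd (Int.not_dvd_sq_sub_mul_add_sq_of_gcd_eq_one hp3 hcop),
    padicValInt.of_nat, padicValNat.pow]
  simp

theorem stmt_3 (N : ℤ) (x y : ℤ) (hN : N = x ^ 2 - x * y + y ^ 2) (hpos : 0 < N)
    (p : ℕ) (hp : p.Prime) (hp3 : p % 3 = 2) :
    Even (padicValInt p N) :=
  stmt_3_general N x y hN p hp hp3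
end

section
/- A rational prime p is prime as an element of the ring ℤ[ω] of Eisenstein integers if and only if p ≡ 2 (mod 3). -/
noncomputable def ω : ℂ := (-1 + Real.sqrt 3 * Complex.I) / 2

noncomputable def Eisen : Subring ℂ := Subring.closure {ω}

lemma omega_mem : ω ∈ Eisen := Subring.subset_closure rfl

lemma sqrt3_sq : (Real.sqrt 3 : ℂ) * (Real.sqrt 3 : ℂ) = 3 := by
  have h : Real.sqrt 3 * Real.sqrt 3 = 3 := Real.mul_self_sqrt (by norm_num)
  exact_mod_cast congrArg (Complex.ofReal) h

lemma omega_sq : ω * ω = -1 - ω := by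
  unfold ω
  have h := sqrt3_sq
  have hI := Complex.I_mul_I
  linear_combination (Complex.I*Complex.I/4) * h + (3/4 : ℂ) * hI

lemma coords_eq_zero {a b : ℤ} (h : (a:ℂ) + b * ω = 0) : a = 0 ∧ b = 0 := by
  have him := congrArg Complex.im h
  have hre := congrArg Complex.re h
  simp [ω, Complex.add_im, Complex.mul_im, Complex.add_re, Complex.mul_re,
    Complex.div_im, Complex.div_re] at him hre
  refine ⟨?_, him⟩
  rw [him] at hre
  norm_num at hre
  exact_mod_cast hre

lemma mem_eisen (a b : ℤ) : (a:ℂ) + b * ω ∈ Eisen := by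
  exact add_mem (intCast_mem _ a) (mul_mem (intCast_mem _ b) omega_mem)

lemma eisen_repr' {z : ℂ} (hz : z ∈ Eisen) : ∃ a b : ℤ, z = a + b * ω := by
  induction hz using Subring.closure_induction with
  | mem x hx =>
    rcases hx with rfl
    exact ⟨0, 1, by push_cast; ring⟩
  | zero => exact ⟨0, 0, by push_cast; ring⟩
  | one => exact ⟨1, 0, by push_cast; ring⟩
  | add x y hx hy ihx ihy =>
    obtain ⟨a, b, h1⟩ := ihx
    obtain ⟨c, d, h2⟩ := ihy
    exact ⟨a + c, b + d, by push_cast; rw [h1, h2]; ring⟩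
  | neg x hx ihx =>
    obtain ⟨a, b, h1⟩ := ihx
    exact ⟨-a, -b, by push_cast; rw [h1]; ring⟩
  | mul x y hx hy ihx ihy =>
    obtain ⟨a, b, h1⟩ := ihx
    obtain ⟨c, d, h2⟩ := ihy
    refine ⟨a * c - b * d, a * d + b * c - b * d, ?_⟩
    push_cast
    rw [h1, h2]
    linear_combination (b:ℂ) * d * omega_sq

lemma eisen_repr (z : Eisen) : ∃ a b : ℤ, (z : ℂ) = a + b * ω := eisen_repr' z.2

/-- key divisibility characterization -/
lemma dvd_coords (p : ℕ) (z : Eisen) (a b : ℤ) (hz : (z:ℂ) = a + b * ω) :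
    (p : Eisen) ∣ z ↔ (p:ℤ) ∣ a ∧ (p:ℤ) ∣ b := by
  constructor
  · rintro ⟨k, rfl⟩
    obtain ⟨c, d, hk⟩ := eisen_repr k
    have : ((a - p * c : ℤ) : ℂ) + ((b - p * d : ℤ) : ℂ) * ω = 0 := by
      push_cast
      have : ((((p:Eisen) * k : Eisen)) : ℂ) = (p:ℂ) * (k:ℂ) := by push_cast; ring
      rw [this, hk] at hz
      rw [sub_mul]
      linear_combination -hz
    obtain ⟨h1, h2⟩ := coords_eq_zero this
    exact ⟨⟨c, by omega⟩, ⟨d, by omega⟩⟩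
  · rintro ⟨⟨c, rfl⟩, ⟨d, rfl⟩⟩
    refine ⟨⟨(c:ℂ) + d * ω, mem_eisen c d⟩, ?_⟩
    apply Subtype.ext
    push_cast [hz]
    ring

lemma norm_key {p : ℕ} (hp : p.Prime) (h2 : p % 3 = 2) (X Y : ZMod p)
    (h : X^2 - X*Y + Y^2 = 0) : X = 0 ∧ Y = 0 := by
  haveI : Fact p.Prime := ⟨hp⟩
  by_cases hY : Y = 0
  · subst hY
    constructor
    · have hX : X ^ 2 = 0 := by linear_combination h
      exact pow_eq_zero_iff two_ne_zero |>.mp hX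
    · rfl
  · exfalso
    set t : ZMod p := X * Y⁻¹ with ht
    have hXt : X = t * Y := by
      rw [ht, mul_assoc, inv_mul_cancel₀ hY, mul_one]
    have hteq : t^2 - t + 1 = 0 := by
      have h' : (t^2 - t + 1) * Y^2 = 0 := by rw [hXt] at h; ring_nf; ring_nf at h; linear_combination h
      rcases mul_eq_zero.mp h' with h'' | h''
      · exact h''
      · exact absurd (pow_eq_zero_iff (by norm_num) |>.mp h'') hY
    have ht1 : t ≠ 1 := by
      intro h1; rw [h1] at hteq; simp at hteq
    have ht0 : t ≠ 0 := by
      intro h1; rw [h1] at hteq; simp at hteq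
    have htm1 : t ≠ -1 := by
      intro h1
      rw [h1] at hteq
      have h3 : (3 : ZMod p) = 0 := by linear_combination hteq
      have hdvd : (p : ℕ) ∣ 3 := by
        exact_mod_cast (ZMod.natCast_eq_zero_iff 3 p).mp (by exact_mod_cast h3)
      have := (Nat.prime_dvd_prime_iff_eq hp (by norm_num)).mp hdvd
      omega
    have ht3 : t^3 = -1 := by linear_combination (t + 1) * hteq
    have ht6 : t^6 = 1 := by
      have : t^6 = (t^3)^2 := by ring
      rw [this, ht3]; ring
    -- pass to units
    obtain ⟨u, hu⟩ := IsUnit.exists_left_inv (Ne.isUnit ht0).unit.isUnit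
    set v : (ZMod p)ˣ := (Ne.isUnit ht0).unit with hv
    have hvt : (v : ZMod p) = t := rfl
    have hv6 : v ^ 6 = 1 := by
      apply Units.ext
      push_cast [hvt]
      exact ht6
    have hd6 : orderOf v ∣ 6 := orderOf_dvd_of_pow_eq_one hv6
    have hvne1 : v ≠ 1 := by
      intro hh; apply ht1; rw [← hvt, hh]; rfl
    have hd1 : orderOf v ≠ 1 := fun hh => hvne1 (orderOf_eq_one_iff.mp hh)
    have hd2 : orderOf v ≠ 2 := by
      intro hh
      have : v ^ 2 = 1 := by rw [← hh]; exact pow_orderOf_eq_one v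
      have ht2 : t ^ 2 = 1 := by
        have := congrArg (Units.val) this
        push_cast [hvt] at this
        exact_mod_cast this
      have : (t - 1) * (t + 1) = 0 := by linear_combination ht2
      rcases mul_eq_zero.mp this with h'' | h''
      · exact ht1 (by linear_combination h'')
      · exact htm1 (by linear_combination h'')
    have h3d : 3 ∣ orderOf v := by
      have hpos : 0 < orderOf v := orderOf_pos v
      have hle : orderOf v ≤ 6 := Nat.le_of_dvd (by norm_num) hd6
      interval_cases h : orderOf v <;> omega
    have hcard : orderOf v ∣ p - 1 := by
      rw [← ZMod.card_units p]
      exact orderOf_dvd_card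
    have : 3 ∣ p - 1 := dvd_trans h3d hcard
    have hp2 : 2 ≤ p := hp.two_le
    omega

lemma exists_root {p : ℕ} (hp : p.Prime) (h1 : p % 3 = 1) :
    ∃ r : ℤ, (p:ℤ) ∣ r^2 + r + 1 := by
  haveI : Fact p.Prime := ⟨hp⟩
  haveI : Fact (Nat.Prime 3) := ⟨by norm_num⟩
  have hcard : 3 ∣ Fintype.card (ZMod p)ˣ := by
    rw [ZMod.card_units p]
    have := hp.two_le
    omega
  obtain ⟨u, hu⟩ := exists_prime_orderOf_dvd_card 3 hcard
  set t : ZMod p := (u : ZMod p) with htdef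
  have ht3 : t ^ 3 = 1 := by
    have : u ^ 3 = 1 := by rw [← hu]; exact pow_orderOf_eq_one u
    have := congrArg (Units.val) this
    push_cast at this
    exact_mod_cast this
  have ht1 : t ≠ 1 := by
    intro hh
    have hu1 : u = 1 := Units.ext (by rw [Units.val_one]; exact hh)
    rw [hu1] at hu
    simp at hu
  have heq : t^2 + t + 1 = 0 := by
    have hfac : (t - 1) * (t^2 + t + 1) = 0 := by linear_combination ht3
    rcases mul_eq_zero.mp hfac with h'' | h''
    · exact absurd (by linear_combination h'') ht1
    · exact h''
  refine ⟨(t.val : ℤ), ?_⟩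
  rw [← ZMod.intCast_zmod_eq_zero_iff_dvd]
  push_cast
  rw [ZMod.natCast_val, ZMod.cast_id]
  linear_combination heq

theorem stmt_5 (p : ℕ) (hp : p.Prime) :
    Prime ((p : Eisen)) ↔ p % 3 = 2 := by
  have hp2 := hp.two_le
  constructor
  · intro hprime
    by_contra hmod
    have h01 : p % 3 = 0 ∨ p % 3 = 1 := by omega
    rcases h01 with h0 | h1
    · -- p = 3
      have hp3 : p = 3 :=
        ((Nat.prime_dvd_prime_iff_eq (by norm_num) hp).mp (Nat.dvd_of_mod_eq_zero h0)).symm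
      subst hp3
      -- 3 divides (1+2ω)^2 = -3 but not 1+2ω
      set z : Eisen := ⟨(1:ℂ) + 2 * ω, by exact_mod_cast mem_eisen 1 2⟩ with hzdef
      have hzz : ((3:ℕ) : Eisen) ∣ z * z := by
        refine ⟨-1, ?_⟩
        apply Subtype.ext
        show (z:ℂ) * (z:ℂ) = ((3:ℕ):ℂ) * (((-1 : Eisen)):ℂ)
        push_cast [hzdef]
        linear_combination (4:ℂ) * omega_sq
      rcases hprime.2.2 z z hzz with hdz | hdz <;>
      · rw [dvd_coords 3 z 1 2 (by push_cast [hzdef]; ring)] at hdz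
        have := Int.le_of_dvd one_pos hdz.1
        omega
    · -- p ≡ 1 mod 3: splits
      obtain ⟨r, hr⟩ := exists_root hp h1
      set z : Eisen := ⟨(r:ℂ) + ((-1 : ℤ):ℂ) * ω, mem_eisen r (-1)⟩ with hzdef
      set w : Eisen := ⟨((r+1 : ℤ):ℂ) + ((1:ℤ):ℂ) * ω, mem_eisen (r+1) 1⟩ with hwdef
      have hzw : (p : Eisen) ∣ z * w := by
        obtain ⟨k, hk⟩ := hr
        refine ⟨((k:ℤ) : Eisen), ?_⟩
        apply Subtype.ext
        show (z:ℂ) * (w:ℂ) = (p:ℂ) * ((k:ℤ):ℂ)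
        push_cast [hzdef, hwdef]
        have hc : ((r:ℂ))^2 + r + 1 = (p:ℂ) * k := by exact_mod_cast congrArg (Int.cast : ℤ → ℂ) hk
        linear_combination hc - omega_sq
      rcases hprime.2.2 z w hzw with hd | hd
      · rw [dvd_coords p z r (-1) (by push_cast [hzdef]; ring)] at hd
        have := Int.le_of_dvd one_pos (dvd_neg.mp hd.2)
        omega
      · rw [dvd_coords p w (r+1) 1 (by push_cast [hwdef]; ring)] at hd
        have := Int.le_of_dvd one_pos hd.2
        omega
  · intro h2
    haveI : Fact p.Prime := ⟨hp⟩
    refine ⟨?_, ?_, ?_⟩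
    · -- not zero
      intro hz
      have : ((p:ℕ):ℂ) = 0 := by exact_mod_cast congrArg (Subtype.val) hz
      have : p = 0 := by exact_mod_cast this
      omega
    · -- not a unit
      intro hu
      have hd : (p : Eisen) ∣ 1 := hu.dvd
      rw [dvd_coords p 1 1 0 (by push_cast; ring)] at hd
      have := Int.le_of_dvd one_pos hd.1
      omega
    · intro z w hzw
      obtain ⟨a, b, hz⟩ := eisen_repr z
      obtain ⟨c, d, hw⟩ := eisen_repr w
      have hprod : ((z * w : Eisen) : ℂ) = ((a*c - b*d : ℤ):ℂ) + ((a*d + b*c - b*d : ℤ):ℂ) * ω := by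
        push_cast
        show (z:ℂ) * (w:ℂ) = _
        rw [hz, hw]
        linear_combination (b:ℂ) * d * omega_sq
      rw [dvd_coords p (z*w) _ _ hprod] at hzw
      obtain ⟨hd1, hd2⟩ := hzw
      -- move to ZMod p
      set A : ZMod p := (a : ZMod p)
      set B : ZMod p := (b : ZMod p)
      set C : ZMod p := (c : ZMod p)
      set D : ZMod p := (d : ZMod p)
      have e1 : A * C - B * D = 0 := by
        have := (ZMod.intCast_zmod_eq_zero_iff_dvd _ p).mpr hd1
        push_cast at this
        exact this
      have e2 : A * D + B * C - B * D = 0 := by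
        have := (ZMod.intCast_zmod_eq_zero_iff_dvd _ p).mpr hd2
        push_cast at this
        exact this
      have hnorm : (A^2 - A*B + B^2) * (C^2 - C*D + D^2) = 0 := by
        have : (A^2 - A*B + B^2) * (C^2 - C*D + D^2) =
            (A*C - B*D)^2 - (A*C - B*D)*(A*D + B*C - B*D) + (A*D + B*C - B*D)^2 := by ring
        rw [this, e1, e2]
        ring
      rcases mul_eq_zero.mp hnorm with hn | hn
      · left
        obtain ⟨hA, hB⟩ := norm_key hp h2 A B hn
        rw [dvd_coords p z a b hz]
        constructor <;> [exact (ZMod.intCast_zmod_eq_zero_iff_dvd _ p).mp hA;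
          exact (ZMod.intCast_zmod_eq_zero_iff_dvd _ p).mp hB]
      · right
        obtain ⟨hC, hD⟩ := norm_key hp h2 C D hn
        rw [dvd_coords p w c d hw]
        constructor <;> [exact (ZMod.intCast_zmod_eq_zero_iff_dvd _ p).mp hC;
          exact (ZMod.intCast_zmod_eq_zero_iff_dvd _ p).mp hD]
end

section
/- A planar triangle T with side lengths a, b, c is realizable with all vertices on the Eisenstein lattice if and only if: (i) the area of T is (√3/4)·n for some n ∈ ℕ; (ii) a², b², c² ∈ ℕ; and (iii) at least one side length has the form r√t with r, t ∈ ℕ and t having no prime divisor ≡ 2 (mod 3). -/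
def EisensteinLattice : Set ℂ := {z : ℂ | ∃ x y : ℤ, z = (x : ℂ) + (y : ℂ) * ω}

/-!
Identify the lattice with the ring `ℤ[ω]`, so that squared distances become norms
`N(x + yω) = x² - xy + y²`. For a triangle `x, y, z` in `ℤ[ω]` with squared sides `α, β, γ`, put
`w = (x - z) * conj (x - y) = s + nω`: then `β + γ - α = tr w` and sixteen times the squared area
is `4βγ - (tr w)² = 4 N(w) - (tr w)² = 3n²`.

`ℤ[ω]` is norm-Euclidean. A prime `p ≡ 2 (mod 3)` stays prime in it (no norm is `2 mod 3`), so it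
divides a norm only to an even power; every other prime `p` is the norm of an Eisenstein prime,
because `p ∣ x² + x + 1 = N(x - ω)` for some `x`. Hence squared sides are of the form `r² t`.

Conversely, Heron's condition `k² + 3n² = 4βγ` with `k = β + γ - α` says that
`w = (k + n)/2 + nω` has trace `k` and norm `βγ`. If `γ = r² t` as above, unique factorisation
gives a divisor `u` of `w` of norm `γ`, and `0, conj u, w / u` is the required triangle.
-/

theorem Int.abs_two_mul_sub_mul_ediv_le (X n : ℤ) (hn : 0 < n) :
    |2 * (X - n * ((2 * X + n) / (2 * n)))| ≤ n := by
  have h := Int.mul_ediv_add_emod (2 * X + n) (2 * n)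
  have h₀ := Int.emod_nonneg (2 * X + n) (by omega : 2 * n ≠ 0)
  have h₁ := Int.emod_lt_of_pos (2 * X + n) (by omega : 0 < 2 * n)
  exact abs_le.2 ⟨by linarith, by linarith⟩

theorem Nat.Prime.exists_int_dvd_sq_add_add_one {p : ℕ} (hp : p.Prime) (hp3 : p % 3 ≠ 2) :
    ∃ x : ℤ, (p : ℤ) ∣ x ^ 2 + x + 1 := by
  rcases (by omega : p % 3 = 0 ∨ p % 3 = 1) with h | h
  · obtain rfl : p = 3 :=
      ((Nat.prime_dvd_prime_iff_eq Nat.prime_three hp).1 (Nat.dvd_of_mod_eq_zero h)).symm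
    exact ⟨1, by norm_num⟩
  have : Fact p.Prime := ⟨hp⟩
  -- an element of order `3` in `(ZMod p)ˣ` is a root of `X² + X + 1`
  obtain ⟨g, hg⟩ := exists_prime_orderOf_dvd_card (G := (ZMod p)ˣ) 3
    (by rw [ZMod.card_units]; omega)
  obtain ⟨x, hx⟩ := ZMod.intCast_surjective (g : ZMod p)
  have h3 : (g : ZMod p) ^ 3 = 1 := by
    rw [← Units.val_pow_eq_pow_val, ← hg, pow_orderOf_eq_one, Units.val_one]
  have h1 : (g : ZMod p) ≠ 1 := by
    intro h1
    rw [Units.val_eq_one.1 h1, orderOf_one] at hg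
    omega
  have hfac : ((g : ZMod p) - 1) * ((g : ZMod p) ^ 2 + g + 1) = 0 := by linear_combination h3
  refine ⟨x, (ZMod.intCast_zmod_eq_zero_iff_dvd _ p).1 ?_⟩
  push_cast
  rw [hx]
  exact (_root_.mul_eq_zero.1 hfac).resolve_left (sub_ne_zero.2 h1)

namespace QuadraticAlgebra

variable {R : Type*} [CommRing R] {a b : R}

theorem norm_sub (v u : QuadraticAlgebra R a b) :
    norm (v - u) = norm v + norm u - trace (v * star u) := by
  simp only [norm_def, trace_def, re_sub, im_sub, re_mul, im_mul, re_star, im_star]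
  ring

theorem irreducible_of_irreducible_norm {z : QuadraticAlgebra R a b} (h : Irreducible (norm z)) :
    Irreducible z where
  not_isUnit hz := h.not_isUnit (isUnit_iff_norm_isUnit.1 hz)
  isUnit_or_isUnit s t hst := by
    simpa only [isUnit_iff_norm_isUnit] using h.isUnit_or_isUnit (by rw [hst, map_mul])

end QuadraticAlgebra

/-- Sixteen times the squared area of a triangle with squared side lengths `α, β, γ` (Heron). -/
def heronForm {R : Type*} [CommRing R] (α β γ : R) : R :=
  2 * (α * β + β * γ + γ * α) - (α ^ 2 + β ^ 2 + γ ^ 2)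

theorem heronForm_rotate {R : Type*} [CommRing R] (α β γ : R) :
    heronForm β γ α = heronForm α β γ := by
  unfold heronForm; ring

open QuadraticAlgebra (algebraMap_norm_eq_mul_star irreducible_of_irreducible_norm norm_def trace
  trace_def)

/-- The Eisenstein integers `x + y ω`, where `ω² = -1 - ω`. -/
abbrev EisensteinInt : Type := QuadraticAlgebra ℤ (-1) (-1)

namespace EisensteinInt

theorem four_mul_norm (z : EisensteinInt) : 4 * z.norm = trace z ^ 2 + 3 * z.im ^ 2 := by
  rw [norm_def, trace_def]; ring

theorem norm_nonneg (z : EisensteinInt) : 0 ≤ z.norm := by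
  nlinarith [four_mul_norm z, sq_nonneg (trace z), sq_nonneg z.im]

theorem norm_eq_zero {z : EisensteinInt} : z.norm = 0 ↔ z = 0 := by
  refine ⟨fun h => ?_, fun h => h ▸ QuadraticAlgebra.norm_zero⟩
  have h4 := four_mul_norm z
  have him : z.im = 0 := by nlinarith [sq_nonneg (trace z), sq_nonneg z.im]
  have htr : trace z = 0 := by nlinarith [sq_nonneg (trace z), sq_nonneg z.im]
  rw [trace_def, him] at htr
  ext <;> simp <;> omega

theorem norm_pos {z : EisensteinInt} (hz : z ≠ 0) : 0 < z.norm :=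
  (norm_nonneg z).lt_of_ne (Ne.symm (mt norm_eq_zero.1 hz))

theorem isUnit_iff_norm_eq_one {z : EisensteinInt} : IsUnit z ↔ z.norm = 1 := by
  rw [QuadraticAlgebra.isUnit_iff_norm_isUnit, Int.isUnit_iff]
  have := norm_nonneg z
  omega

theorem norm_sub_comm (x y : EisensteinInt) : (x - y).norm = (y - x).norm := by
  rw [← neg_sub, QuadraticAlgebra.norm_neg]

theorem intCast_norm (z : EisensteinInt) : (z.norm : EisensteinInt) = z * star z := by
  rw [← algebraMap_norm_eq_mul_star, algebraMap_int_eq, eq_intCast]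

theorem norm_lt_sq_of_abs_two_mul_le {n : ℤ} (hn : 0 < n) {z : EisensteinInt}
    (hre : |2 * z.re| ≤ n) (him : |2 * z.im| ≤ n) : z.norm < n ^ 2 := by
  obtain ⟨hre₁, hre₂⟩ := abs_le.1 hre
  obtain ⟨him₁, him₂⟩ := abs_le.1 him
  have : 4 * z.norm ≤ 3 * n ^ 2 := by
    rw [norm_def]
    nlinarith [mul_nonneg (sub_nonneg.2 hre₂) (sub_nonneg.2 him₂),
      mul_nonneg (neg_le_iff_add_nonneg.1 hre₁) (neg_le_iff_add_nonneg.1 him₁),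
      mul_nonneg (sub_nonneg.2 hre₂) (neg_le_iff_add_nonneg.1 hre₁),
      mul_nonneg (sub_nonneg.2 him₂) (neg_le_iff_add_nonneg.1 him₁)]
  nlinarith

/-- `(2X + n) / (2n)` is `X / n` rounded to the nearest integer, so `x / y` rounds the
coordinates of `x * star y / N(y)`. -/
instance : Div EisensteinInt where
  div x y := ⟨(2 * (x * star y).re + y.norm) / (2 * y.norm),
    (2 * (x * star y).im + y.norm) / (2 * y.norm)⟩

theorem div_def (x y : EisensteinInt) : x / y = ⟨(2 * (x * star y).re + y.norm) / (2 * y.norm),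
    (2 * (x * star y).im + y.norm) / (2 * y.norm)⟩ := rfl

instance : Mod EisensteinInt where
  mod x y := x - y * (x / y)

theorem norm_mod_lt (x : EisensteinInt) {y : EisensteinInt} (hy : y ≠ 0) :
    (x % y).norm < y.norm := by
  have hn := norm_pos hy
  have hmod : x % y * star y = ⟨(x * star y).re - y.norm * (x / y).re,
      (x * star y).im - y.norm * (x / y).im⟩ := by
    have : x % y * star y = x * star y - x / y * (y.norm : EisensteinInt) := by
      rw [intCast_norm]
      show (x - y * (x / y)) * star y = _
      ring
    rw [this]
    ext <;> simp [mul_comm]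
  have hlt : (x % y * star y).norm < y.norm ^ 2 := by
    rw [hmod]
    exact norm_lt_sq_of_abs_two_mul_le hn (Int.abs_two_mul_sub_mul_ediv_le _ _ hn)
      (Int.abs_two_mul_sub_mul_ediv_le _ _ hn)
  rw [map_mul, QuadraticAlgebra.norm_star, sq] at hlt
  exact lt_of_mul_lt_mul_right hlt hn.le

instance : EuclideanDomain EisensteinInt where
  quotient := (· / ·)
  remainder := (· % ·)
  quotient_zero x := by ext <;> simp [div_def]
  quotient_mul_add_remainder_eq x y := by
    show y * (x / y) + (x - y * (x / y)) = x
    ring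
  r := InvImage (· < ·) fun z => z.norm.natAbs
  r_wellFounded := (measure fun z : EisensteinInt => z.norm.natAbs).wf
  remainder_lt x y hy := by
    show (x % y).norm.natAbs < y.norm.natAbs
    have := norm_mod_lt x hy
    have := norm_nonneg (x % y)
    omega
  mul_left_not_lt x y hy := by
    show ¬ (x * y).norm.natAbs < x.norm.natAbs
    rw [map_mul, Int.natAbs_mul, not_lt]
    exact Nat.le_mul_of_pos_right _ (Int.natAbs_pos.2 (norm_pos hy).ne')

theorem norm_emod_three_ne_two (z : EisensteinInt) : z.norm % 3 ≠ 2 := by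
  intro h
  have hz : ((z.norm : ℤ) : ZMod 3) = ((2 : ℤ) : ZMod 3) :=
    (ZMod.intCast_eq_intCast_iff' _ _ 3).2 (by simpa using h)
  rw [norm_def] at hz
  push_cast at hz
  exact (by decide : ∀ u v : ZMod 3, u * u + -1 * u * v - -1 * v * v ≠ 2) _ _ hz

theorem intCast_dvd_iff {n : ℤ} {z : EisensteinInt} :
    (n : EisensteinInt) ∣ z ↔ n ∣ z.re ∧ n ∣ z.im := by
  constructor
  · rintro ⟨w, rfl⟩
    simp
  · rintro ⟨⟨u, hu⟩, ⟨v, hv⟩⟩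
    exact ⟨⟨u, v⟩, by ext <;> simp [hu, hv]⟩

theorem intCast_dvd_mul_star_of_dvd_norm {n : ℤ} {z : EisensteinInt} (h : n ∣ z.norm) :
    (n : EisensteinInt) ∣ z * star z :=
  intCast_norm z ▸ map_dvd (Int.castRingHom _) h

theorem star_dvd_of_dvd_star {x y : EisensteinInt} (h : x ∣ star y) : star x ∣ y := by
  obtain ⟨c, hc⟩ := h
  exact ⟨star c, by rw [← star_star y, hc, star_mul, mul_comm]⟩

theorem exists_norm_eq_of_not_irreducible {p : ℕ} (hp : p.Prime)
    (h : ¬ Irreducible (p : EisensteinInt)) : ∃ π : EisensteinInt, π.norm = p := by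
  have hpu : ¬ IsUnit (p : EisensteinInt) := by
    rw [isUnit_iff_norm_eq_one, QuadraticAlgebra.norm_natCast]
    exact_mod_cast (Nat.one_lt_pow two_ne_zero hp.one_lt).ne'
  obtain ⟨s, t, hst, hs, ht⟩ : ∃ s t, (p : EisensteinInt) = s * t ∧ ¬ IsUnit s ∧ ¬ IsUnit t := by
    simpa [irreducible_iff, hpu, not_forall, not_or] using h
  obtain ⟨m, hm⟩ := Int.eq_ofNat_of_zero_le (norm_nonneg s)
  obtain ⟨k, hk⟩ := Int.eq_ofNat_of_zero_le (norm_nonneg t)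
  rw [isUnit_iff_norm_eq_one, hm] at hs
  rw [isUnit_iff_norm_eq_one, hk] at ht
  have hmk : m * k = p ^ 2 := by
    have := congrArg QuadraticAlgebra.norm hst
    rw [map_mul, QuadraticAlgebra.norm_natCast, hm, hk] at this
    exact_mod_cast this.symm
  exact ⟨s, by rw [hm, ((hp.mul_eq_prime_sq_iff (by omega) (by omega)).1 hmk).1]⟩

theorem prime_of_norm_eq_prime {π : EisensteinInt} {p : ℕ} (hp : p.Prime) (hπ : π.norm = p) :
    Prime π :=
  (irreducible_of_irreducible_norm (hπ ▸ (Nat.prime_iff_prime_int.1 hp).irreducible)).prime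

theorem prime_natCast_of_mod_three_eq_two {p : ℕ} (hp : p.Prime) (hp3 : p % 3 = 2) :
    Prime (p : EisensteinInt) := by
  rw [← irreducible_iff_prime]
  by_contra h
  obtain ⟨π, hπ⟩ := exists_norm_eq_of_not_irreducible hp h
  exact norm_emod_three_ne_two π (by omega)

theorem natCast_dvd_of_dvd_norm {p : ℕ} (hp : p.Prime) (hp3 : p % 3 = 2) {z : EisensteinInt}
    (h : (p : ℤ) ∣ z.norm) : (p : EisensteinInt) ∣ z := by
  have := intCast_dvd_mul_star_of_dvd_norm h
  rw [Int.cast_natCast] at this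
  rcases (prime_natCast_of_mod_three_eq_two hp hp3).dvd_or_dvd this with h | h
  · exact h
  · simpa using star_dvd_of_dvd_star h

theorem exists_prime_norm_eq {p : ℕ} (hp : p.Prime) (hp3 : p % 3 ≠ 2) :
    ∃ π : EisensteinInt, Prime π ∧ π.norm = p := by
  obtain ⟨x, hx⟩ := hp.exists_int_dvd_sq_add_add_one hp3
  suffices h : ¬ Irreducible (p : EisensteinInt) by
    obtain ⟨π, hπ⟩ := exists_norm_eq_of_not_irreducible hp h
    exact ⟨π, prime_of_norm_eq_prime hp hπ, hπ⟩
  rw [irreducible_iff_prime]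
  intro hprime
  -- `p` divides `N(x - ω) = x ^ 2 + x + 1` but neither `x - ω` nor its conjugate
  let w : EisensteinInt := ⟨x, -1⟩
  have hw : (p : ℤ) ∣ w.norm := by rw [norm_def]; convert hx using 1; ring
  have hp1 : ¬ (p : ℤ) ∣ 1 := by exact_mod_cast hp.not_dvd_one
  have := intCast_dvd_mul_star_of_dvd_norm hw
  rw [Int.cast_natCast] at this
  rcases hprime.dvd_or_dvd this with h | h <;>
    rw [← Int.cast_natCast, intCast_dvd_iff] at h <;>
    exact hp1 (by simpa [w] using h.2)

theorem exists_norm_eq_sq_mul (z : EisensteinInt) :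
    ∃ r t : ℕ, z.norm = r ^ 2 * t ∧ ∀ p : ℕ, p.Prime → p % 3 = 2 → ¬ p ∣ t := by
  obtain ⟨m, hm⟩ := Int.eq_ofNat_of_zero_le (norm_nonneg z)
  induction m using Nat.strong_induction_on generalizing z with
  | _ m ih =>
  by_cases hbad : ∃ p : ℕ, p.Prime ∧ p % 3 = 2 ∧ p ∣ m
  · obtain ⟨p, hp, hp3, hpm⟩ := hbad
    obtain ⟨z', rfl⟩ := natCast_dvd_of_dvd_norm hp hp3 (hm ▸ Int.natCast_dvd_natCast.2 hpm)
    obtain ⟨m', hm'⟩ := Int.eq_ofNat_of_zero_le (norm_nonneg z')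
    have hmm' : m = p ^ 2 * m' := by
      rw [map_mul, QuadraticAlgebra.norm_natCast, hm'] at hm
      exact_mod_cast hm.symm
    rcases Nat.eq_zero_or_pos m' with hm0 | hm0
    · exact ⟨0, 1, by simp [map_mul, hm', hm0], fun p hp _ => hp.not_dvd_one⟩
    have hlt : m' < m := by
      rw [hmm']
      exact lt_mul_left hm0 (Nat.one_lt_pow two_ne_zero hp.one_lt)
    obtain ⟨r, t, hrt, ht⟩ := ih m' hlt z' hm'
    refine ⟨p * r, t, ?_, ht⟩
    rw [map_mul, QuadraticAlgebra.norm_natCast, hrt]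
    push_cast
    ring
  · push Not at hbad
    exact ⟨1, m, by rw [hm]; ring, hbad⟩

def HasDvdOfNorm (m : ℤ) : Prop :=
  ∀ w : EisensteinInt, m ∣ w.norm → ∃ u, u ∣ w ∧ u.norm = m

theorem hasDvdOfNorm_zero : HasDvdOfNorm 0 := fun w hw =>
  ⟨0, by rw [norm_eq_zero.1 (zero_dvd_iff.1 hw)], QuadraticAlgebra.norm_zero⟩

theorem hasDvdOfNorm_one : HasDvdOfNorm 1 := fun _ _ => ⟨1, one_dvd _, QuadraticAlgebra.norm_one⟩

theorem HasDvdOfNorm.mul {m k : ℤ} (hm : HasDvdOfNorm m) (hk : HasDvdOfNorm k) :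
    HasDvdOfNorm (m * k) := by
  intro w hw
  obtain ⟨u, ⟨w', rfl⟩, hu⟩ := hm w (dvd_of_mul_right_dvd hw)
  rcases eq_or_ne m 0 with rfl | hm0
  · exact ⟨u, dvd_mul_right u w', by rw [hu, zero_mul]⟩
  rw [map_mul, hu] at hw
  obtain ⟨v, hv, hvn⟩ := hk w' ((mul_dvd_mul_iff_left hm0).1 hw)
  exact ⟨u * v, mul_dvd_mul_left u hv, by rw [map_mul, hu, hvn]⟩

theorem hasDvdOfNorm_norm_of_prime {π : EisensteinInt} (hπ : Prime π) : HasDvdOfNorm π.norm := by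
  intro w hw
  have hπw : π ∣ w * star w :=
    (intCast_norm π ▸ dvd_mul_right π (star π)).trans (intCast_dvd_mul_star_of_dvd_norm hw)
  rcases hπ.dvd_or_dvd hπw with h | h
  · exact ⟨π, h, rfl⟩
  · exact ⟨star π, star_dvd_of_dvd_star h, QuadraticAlgebra.norm_star π⟩

theorem hasDvdOfNorm_prime_sq {p : ℕ} (hp : p.Prime) : HasDvdOfNorm (p ^ 2) := by
  by_cases hp3 : p % 3 = 2
  · simpa using hasDvdOfNorm_norm_of_prime (prime_natCast_of_mod_three_eq_two hp hp3)
  · obtain ⟨π, hπ, hπp⟩ := exists_prime_norm_eq hp hp3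
    rw [sq, ← hπp]
    exact (hasDvdOfNorm_norm_of_prime hπ).mul (hasDvdOfNorm_norm_of_prime hπ)

theorem hasDvdOfNorm_sq (r : ℕ) : HasDvdOfNorm (r ^ 2) := by
  induction r using Nat.recOnMul with
  | zero => simpa using hasDvdOfNorm_zero
  | one => simpa using hasDvdOfNorm_one
  | prime p hp => exact hasDvdOfNorm_prime_sq hp
  | mul a b ha hb => simpa [mul_pow] using ha.mul hb

theorem hasDvdOfNorm_of_forall_not_dvd {t : ℕ} (ht : ∀ p : ℕ, p.Prime → p % 3 = 2 → ¬ p ∣ t) :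
    HasDvdOfNorm t := by
  induction t using Nat.recOnMul with
  | zero => simpa using hasDvdOfNorm_zero
  | one => simpa using hasDvdOfNorm_one
  | prime p hp =>
    obtain ⟨π, hπ, hπp⟩ := exists_prime_norm_eq hp (fun h => ht p hp h dvd_rfl)
    exact hπp ▸ hasDvdOfNorm_norm_of_prime hπ
  | mul a b ha hb =>
    push_cast
    exact (ha fun p hp hp3 h => ht p hp hp3 (h.mul_right b)).mul
      (hb fun p hp hp3 h => ht p hp hp3 (h.mul_left a))

theorem hasDvdOfNorm_sq_mul (r : ℕ) {t : ℕ} (ht : ∀ p : ℕ, p.Prime → p % 3 = 2 → ¬ p ∣ t) :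
    HasDvdOfNorm (r ^ 2 * t) :=
  (hasDvdOfNorm_sq r).mul (hasDvdOfNorm_of_forall_not_dvd ht)

theorem heronForm_norm (x y z : EisensteinInt) :
    heronForm (y - z).norm (x - z).norm (x - y).norm = 3 * ((x - z) * star (x - y)).im ^ 2 := by
  have hsub := QuadraticAlgebra.norm_sub (x - z) (x - y)
  have h4 := four_mul_norm ((x - z) * star (x - y))
  rw [map_mul, QuadraticAlgebra.norm_star] at h4
  rw [sub_sub_sub_cancel_left] at hsub
  rw [heronForm, hsub]
  linear_combination h4

def IsTriangleNorms (α β γ : ℤ) : Prop :=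
  ∃ x y z : EisensteinInt, (y - z).norm = α ∧ (x - z).norm = β ∧ (x - y).norm = γ

theorem IsTriangleNorms.rotate {α β γ : ℤ} (h : IsTriangleNorms α β γ) :
    IsTriangleNorms β γ α := by
  obtain ⟨x, y, z, hα, hβ, hγ⟩ := h
  exact ⟨y, z, x, by rwa [norm_sub_comm], by rwa [norm_sub_comm], hα⟩

theorem IsTriangleNorms.exists_heronForm_eq {α β γ : ℤ} (h : IsTriangleNorms α β γ) :
    ∃ n : ℕ, heronForm α β γ = 3 * n ^ 2 := by
  obtain ⟨x, y, z, rfl, rfl, rfl⟩ := h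
  exact ⟨((x - z) * star (x - y)).im.natAbs, by rw [heronForm_norm, Int.natAbs_sq]⟩

theorem IsTriangleNorms.exists_eq_sq_mul {α β γ : ℤ} (h : IsTriangleNorms α β γ) :
    ∃ r t : ℕ, α = r ^ 2 * t ∧ ∀ p : ℕ, p.Prime → p % 3 = 2 → ¬ p ∣ t := by
  obtain ⟨x, y, z, rfl, -, -⟩ := h
  exact exists_norm_eq_sq_mul (y - z)

theorem isTriangleNorms_of_heronForm {α β γ n : ℤ} (h : heronForm α β γ = 3 * n ^ 2)
    (hγ0 : γ ≠ 0) (hγ : HasDvdOfNorm γ) : IsTriangleNorms α β γ := by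
  set k := β + γ - α with hk
  have hkn : k ^ 2 + 3 * n ^ 2 = 4 * β * γ := by rw [← h, heronForm]; ring
  obtain ⟨j, hj⟩ : Even (k + n) := by
    refine (Int.even_pow' two_ne_zero).1 ⟨2 * β * γ - n ^ 2 + k * n, ?_⟩
    linear_combination hkn
  -- `w` is to be `(x - z) * star (x - y)` for the vertices `x = 0`, `y = star u`, `z = v` below
  let w : EisensteinInt := ⟨j, n⟩
  have htr : trace w = k := by simp only [trace_def, w]; linarith
  have hw : w.norm = γ * β := by
    have := four_mul_norm w
    rw [htr] at this
    linarith
  obtain ⟨u, ⟨v, huv⟩, hu⟩ := hγ w ⟨β, hw⟩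
  have hv : v.norm = β := by
    rw [huv, map_mul, hu] at hw
    exact mul_left_cancel₀ hγ0 hw
  refine ⟨0, star u, v, ?_, by simpa using hv, by simpa using hu⟩
  rw [norm_sub_comm, QuadraticAlgebra.norm_sub, star_star, mul_comm, ← huv, htr,
    QuadraticAlgebra.norm_star, hu, hv, hk]
  ring

theorem isTriangleNorms_of_heronForm_of_or {α β γ n : ℤ} (h : heronForm α β γ = 3 * n ^ 2)
    (hα0 : α ≠ 0) (hβ0 : β ≠ 0) (hγ0 : γ ≠ 0)
    (hdvd : HasDvdOfNorm α ∨ HasDvdOfNorm β ∨ HasDvdOfNorm γ) : IsTriangleNorms α β γ := by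
  rcases hdvd with hα | hβ | hγ
  · exact (isTriangleNorms_of_heronForm (by rwa [heronForm_rotate]) hα0 hα).rotate.rotate
  · refine (isTriangleNorms_of_heronForm (n := n) ?_ hβ0 hβ).rotate
    rwa [heronForm_rotate, heronForm_rotate]
  · exact isTriangleNorms_of_heronForm h hγ0 hγ

theorem omega_mul_omega : ω * ω = (-1 : ℤ) • (1 : ℂ) + (-1 : ℤ) • ω := by
  have h3 : (Real.sqrt 3 : ℂ) ^ 2 = 3 := by norm_cast; simp
  simp only [ω, neg_smul, one_smul]
  linear_combination (Complex.I ^ 2 / 4) * h3 + (3 / 4 : ℂ) * Complex.I_sq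

noncomputable def toComplex : EisensteinInt →ₐ[ℤ] ℂ := QuadraticAlgebra.lift ⟨ω, omega_mul_omega⟩

theorem toComplex_apply (z : EisensteinInt) : toComplex z = z.re + z.im * ω := by
  simp [toComplex, zsmul_eq_mul]

theorem range_toComplex : Set.range toComplex = EisensteinLattice := by
  ext w
  simp only [Set.mem_range, toComplex_apply]
  exact ⟨fun ⟨z, hz⟩ => ⟨z.re, z.im, hz.symm⟩, fun ⟨x, y, h⟩ => ⟨⟨x, y⟩, h.symm⟩⟩

theorem normSq_toComplex (z : EisensteinInt) : Complex.normSq (toComplex z) = z.norm := by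
  have h3 : Real.sqrt 3 ^ 2 = 3 := by simp
  rw [toComplex_apply, Complex.normSq_apply, norm_def]
  simp [ω]
  linear_combination (z.im : ℝ) ^ 2 / 4 * h3

theorem dist_toComplex_eq_iff {x y : EisensteinInt} {a : ℝ} (ha : 0 ≤ a) :
    dist (toComplex x) (toComplex y) = a ↔ ((x - y).norm : ℝ) = a ^ 2 := by
  rw [← sq_eq_sq₀ dist_nonneg ha, Complex.dist_eq, Complex.sq_norm, ← map_sub, normSq_toComplex]

theorem exists_lattice_triangle_iff {a b c : ℝ} (ha : 0 ≤ a) (hb : 0 ≤ b) (hc : 0 ≤ c) :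
    (∃ A B C : ℂ, A ∈ EisensteinLattice ∧ B ∈ EisensteinLattice ∧ C ∈ EisensteinLattice ∧
      dist B C = a ∧ dist A C = b ∧ dist A B = c) ↔
    ∃ α β γ : ℕ, a ^ 2 = α ∧ b ^ 2 = β ∧ c ^ 2 = γ ∧ IsTriangleNorms α β γ := by
  simp only [← range_toComplex]
  constructor
  · rintro ⟨_, _, _, ⟨x, rfl⟩, ⟨y, rfl⟩, ⟨z, rfl⟩, hα, hβ, hγ⟩
    rw [dist_toComplex_eq_iff ha] at hα
    rw [dist_toComplex_eq_iff hb] at hβ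
    rw [dist_toComplex_eq_iff hc] at hγ
    obtain ⟨α, hα'⟩ := Int.eq_ofNat_of_zero_le (norm_nonneg (y - z))
    obtain ⟨β, hβ'⟩ := Int.eq_ofNat_of_zero_le (norm_nonneg (x - z))
    obtain ⟨γ, hγ'⟩ := Int.eq_ofNat_of_zero_le (norm_nonneg (x - y))
    refine ⟨α, β, γ, ?_, ?_, ?_, x, y, z, hα', hβ', hγ'⟩ <;> simp_all
  · rintro ⟨α, β, γ, hα, hβ, hγ, x, y, z, hα', hβ', hγ'⟩
    refine ⟨_, _, _, ⟨x, rfl⟩, ⟨y, rfl⟩, ⟨z, rfl⟩, (dist_toComplex_eq_iff ha).2 ?_,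
      (dist_toComplex_eq_iff hb).2 ?_, (dist_toComplex_eq_iff hc).2 ?_⟩ <;> simp_all

end EisensteinInt

open EisensteinInt

theorem heron_iff_heronForm_eq {a b c : ℝ} {α β γ : ℕ} (hα : a ^ 2 = α) (hβ : b ^ 2 = β)
    (hγ : c ^ 2 = γ) (n : ℕ) :
    16 * (√3 / 4 * n) ^ 2 = (a + b + c) * (a + b - c) * (a - b + c) * (-a + b + c) ↔
      heronForm (α : ℤ) β γ = 3 * n ^ 2 := by
  have h16 : 16 * (√3 / 4 * n) ^ 2 = 3 * (n : ℝ) ^ 2 := by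
    rw [mul_pow, div_pow, Real.sq_sqrt zero_le_three]; ring
  have hheron : (a + b + c) * (a + b - c) * (a - b + c) * (-a + b + c) =
      heronForm (α : ℝ) β γ := by
    rw [← hα, ← hβ, ← hγ, heronForm]; ring
  rw [h16, hheron, eq_comm, ← Int.cast_inj (α := ℝ)]
  simp [heronForm]

theorem eq_natCast_mul_sqrt_iff {s : ℝ} (hs : 0 ≤ s) (r t : ℕ) :
    s = r * √t ↔ s ^ 2 = r ^ 2 * t := by
  refine ⟨fun h => by rw [h, mul_pow, Real.sq_sqrt t.cast_nonneg], fun h => ?_⟩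
  rw [← Real.sqrt_sq hs, h, Real.sqrt_mul (by positivity), Real.sqrt_sq r.cast_nonneg]

theorem hasDvdOfNorm_of_eq_mul_sqrt {s : ℝ} (hs : 0 ≤ s) {m r t : ℕ} (hm : s ^ 2 = m)
    (hst : s = r * √t) (ht : ∀ p : ℕ, p.Prime → p % 3 = 2 → ¬ p ∣ t) : HasDvdOfNorm m := by
  rw [eq_natCast_mul_sqrt_iff hs, hm] at hst
  have hm' : (m : ℤ) = r ^ 2 * t := by exact_mod_cast hst
  exact hm' ▸ hasDvdOfNorm_sq_mul r ht

theorem stmt_14_general (a b c : ℝ) (ha : 0 < a) (hb : 0 < b) (hc : 0 < c) :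
    (∃ A B C : ℂ, A ∈ EisensteinLattice ∧ B ∈ EisensteinLattice ∧ C ∈ EisensteinLattice ∧
      dist B C = a ∧ dist A C = b ∧ dist A B = c) ↔
    ((∃ n : ℕ, 16 * (Real.sqrt 3 / 4 * n) ^ 2 =
        (a + b + c) * (a + b - c) * (a - b + c) * (-a + b + c)) ∧
     (∃ A B C : ℕ, a ^ 2 = (A : ℝ) ∧ b ^ 2 = (B : ℝ) ∧ c ^ 2 = (C : ℝ)) ∧
     (∃ s ∈ ({a, b, c} : Set ℝ), ∃ r t : ℕ, s = (r : ℝ) * Real.sqrt t ∧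
        ∀ p : ℕ, p.Prime → p % 3 = 2 → ¬ p ∣ t)) := by
  rw [exists_lattice_triangle_iff ha.le hb.le hc.le]
  constructor
  · rintro ⟨α, β, γ, hα, hβ, hγ, hT⟩
    obtain ⟨n, hn⟩ := hT.exists_heronForm_eq
    obtain ⟨r, t, hrt, ht⟩ := hT.exists_eq_sq_mul
    refine ⟨⟨n, (heron_iff_heronForm_eq hα hβ hγ n).2 hn⟩, ⟨α, β, γ, hα, hβ, hγ⟩,
      a, by simp, r, t, (eq_natCast_mul_sqrt_iff ha.le r t).2 ?_, ht⟩
    rw [hα]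
    exact_mod_cast hrt
  · rintro ⟨⟨n, hn⟩, ⟨α, β, γ, hα, hβ, hγ⟩, s, hs, r, t, hst, ht⟩
    refine ⟨α, β, γ, hα, hβ, hγ, isTriangleNorms_of_heronForm_of_or
      ((heron_iff_heronForm_eq hα hβ hγ n).1 hn) (by exact_mod_cast (hα ▸ pow_pos ha 2).ne')
      (by exact_mod_cast (hβ ▸ pow_pos hb 2).ne') (by exact_mod_cast (hγ ▸ pow_pos hc 2).ne') ?_⟩
    rcases hs with rfl | rfl | rfl
    · exact Or.inl (hasDvdOfNorm_of_eq_mul_sqrt ha.le hα hst ht)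
    · exact Or.inr (Or.inl (hasDvdOfNorm_of_eq_mul_sqrt hb.le hβ hst ht))
    · exact Or.inr (Or.inr (hasDvdOfNorm_of_eq_mul_sqrt hc.le hγ hst ht))

theorem stmt_14 (a b c : ℝ) (ha : 0 < a) (hb : 0 < b) (hc : 0 < c)
    (hab : c < a + b) (hbc : a < b + c) (hac : b < a + c) :
    (∃ A B C : ℂ, A ∈ EisensteinLattice ∧ B ∈ EisensteinLattice ∧ C ∈ EisensteinLattice ∧
      dist B C = a ∧ dist A C = b ∧ dist A B = c) ↔
    ((∃ n : ℕ, 16 * (Real.sqrt 3 / 4 * n) ^ 2 =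
        (a + b + c) * (a + b - c) * (a - b + c) * (-a + b + c)) ∧
     (∃ A B C : ℕ, a ^ 2 = (A : ℝ) ∧ b ^ 2 = (B : ℝ) ∧ c ^ 2 = (C : ℝ)) ∧
     (∃ s ∈ ({a, b, c} : Set ℝ), ∃ r t : ℕ, s = (r : ℝ) * Real.sqrt t ∧
        ∀ p : ℕ, p.Prime → p % 3 = 2 → ¬ p ∣ t)) :=
  stmt_14_general a b c ha hb hc
end

section
/- Suppose positive reals a, b, c satisfy the triangle inequalities, a², b², c² ∈ ℕ, the triangle with sides a, b, c has area (√3/4)·n for some n ∈ ℕ, and a = r√t with r, t ∈ ℕ where t has no prime divisor ≡ 2 (mod 3). Then b and c also have the form r'√t' with r', t' ∈ ℕ and t' having no prime divisor ≡ 2 (mod 3). -/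
/-!
Heron's formula says that (a² + b² - c²)² + 3n² = 4a²b², an identity between integers.
If x² + 3y² = 4N then x ≡ y (mod 2), so N = u² + uv + v² is a norm form of the Eisenstein
integers. A prime p ≡ 2 (mod 3) dividing u² + uv + v² divides both u and v: otherwise u/v
would be a primitive cube root of unity in 𝔽_p, forcing 3 ∣ p - 1. Descent then shows that
such primes divide a²b² to an even power, and since they divide a² = r²t to an even power,
they divide b² to an even power as well; the same holds for c².
-/

theorem ZMod.eq_zero_of_sq_add_mul_add_sq_eq_zero {p : ℕ} [Fact p.Prime] (hp : p % 3 = 2)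
    {x y : ZMod p} (h : x ^ 2 + x * y + y ^ 2 = 0) : y = 0 := by
  by_contra hy
  set u := x / y
  have hu : u ^ 2 + u + 1 = 0 := by
    simp only [u, div_pow]
    field_simp
    linear_combination h
  have hu1 : u ≠ 1 := by
    intro h1
    have h3 : ((3 : ℕ) : ZMod p) = 0 := by rw [h1] at hu; push_cast; linear_combination hu
    rw [ZMod.natCast_eq_zero_iff, Nat.prime_dvd_prime_iff_eq Fact.out Nat.prime_three] at h3
    omega
  have hu0 : u ≠ 0 := by rintro h0; simp [h0] at hu
  have horder : orderOf u = 3 := orderOf_eq_prime (by linear_combination (u - 1) * hu) hu1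
  have := horder ▸ ZMod.orderOf_dvd_card_sub_one hu0
  omega

theorem Int.dvd_and_dvd_of_prime_dvd_sq_add_mul_add_sq {p : ℕ} (hp : p.Prime) (hp3 : p % 3 = 2)
    {x y : ℤ} (h : (p : ℤ) ∣ x ^ 2 + x * y + y ^ 2) : (p : ℤ) ∣ x ∧ (p : ℤ) ∣ y := by
  have := Fact.mk hp
  have h' : (x : ZMod p) ^ 2 + x * y + (y : ZMod p) ^ 2 = 0 := by
    exact_mod_cast (ZMod.intCast_zmod_eq_zero_iff_dvd _ p).mpr h
  simp only [← ZMod.intCast_zmod_eq_zero_iff_dvd]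
  exact ⟨ZMod.eq_zero_of_sq_add_mul_add_sq_eq_zero (x := (y : ZMod p)) hp3
    (by linear_combination h'), ZMod.eq_zero_of_sq_add_mul_add_sq_eq_zero hp3 h'⟩

theorem Nat.even_factorization_of_eq_sq_add_mul_add_sq {p : ℕ} (hp : p.Prime) (hp3 : p % 3 = 2)
    {N : ℕ} {x y : ℤ} (h : (N : ℤ) = x ^ 2 + x * y + y ^ 2) : Even (N.factorization p) := by
  induction N using Nat.strong_induction_on generalizing x y with
  | _ N ih =>
  rcases eq_or_ne N 0 with rfl | hN
  · simp
  by_cases hpN : p ∣ N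
  swap
  · simp [factorization_eq_zero_of_not_dvd hpN]
  obtain ⟨⟨x, rfl⟩, ⟨y, rfl⟩⟩ :=
    Int.dvd_and_dvd_of_prime_dvd_sq_add_mul_add_sq hp hp3 (h ▸ Int.natCast_dvd_natCast.mpr hpN)
  have hp2 : (p ^ 2 : ℤ) ∣ N := ⟨x ^ 2 + x * y + y ^ 2, by linear_combination h⟩
  obtain ⟨M, rfl⟩ : p ^ 2 ∣ N := by exact_mod_cast hp2
  have hM : M ≠ 0 := right_ne_zero_of_mul hN
  have hpos : (0 : ℤ) < p ^ 2 := by have := hp.pos; positivity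
  have hMxy : (M : ℤ) = x ^ 2 + x * y + y ^ 2 := by
    refine mul_left_cancel₀ hpos.ne' ?_
    push_cast at h
    linear_combination h
  have hlt : M < p ^ 2 * M :=
    lt_mul_left (Nat.pos_of_ne_zero hM) (Nat.one_lt_pow two_ne_zero hp.one_lt)
  rw [factorization_mul (pow_ne_zero 2 hp.ne_zero) hM, hp.factorization_pow]
  simpa using even_two.add (ih M hlt hMxy)

theorem Int.exists_eq_sq_add_mul_add_sq_of_sq_add_three_mul_sq {x y n : ℤ}
    (h : x ^ 2 + 3 * y ^ 2 = 4 * n) : ∃ u v : ℤ, n = u ^ 2 + u * v + v ^ 2 := by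
  have hsq : Even ((x - y) ^ 2) := ⟨2 * n - x * y - y ^ 2, by linear_combination h⟩
  obtain ⟨k, hk⟩ := (Int.even_pow.mp hsq).1
  refine ⟨k, y, mul_left_cancel₀ (four_ne_zero (α := ℤ)) ?_⟩
  linear_combination -h + (x + y + 2 * k) * hk

theorem Nat.even_factorization_of_sq_add_three_mul_sq_eq {p : ℕ} (hp : p.Prime) (hp3 : p % 3 = 2)
    {N : ℕ} {x y : ℤ} (h : x ^ 2 + 3 * y ^ 2 = 4 * N) : Even (N.factorization p) :=
  have ⟨_, _, huv⟩ := Int.exists_eq_sq_add_mul_add_sq_of_sq_add_three_mul_sq h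
  even_factorization_of_eq_sq_add_mul_add_sq hp hp3 huv

theorem Nat.even_factorization_of_even_factorization_mul {m n p : ℕ} (hm : m ≠ 0)
    (hmn : Even ((m * n).factorization p)) (hm' : Even (m.factorization p)) :
    Even (n.factorization p) := by
  rcases eq_or_ne n 0 with rfl | hn
  · simp
  rw [factorization_mul hm hn, Finsupp.add_apply] at hmn
  exact (Nat.even_add.mp hmn).mp hm'

theorem Nat.exists_eq_sq_mul_iff_even_factorization (P : ℕ → Prop) (n : ℕ) :
    (∃ r t : ℕ, n = r ^ 2 * t ∧ ∀ p, p.Prime → P p → ¬ p ∣ t) ↔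
      ∀ p, p.Prime → P p → Even (n.factorization p) := by
  constructor
  · rintro ⟨r, t, rfl, ht⟩ p hp hPp
    rcases eq_or_ne r 0 with rfl | hr
    · simp
    rcases eq_or_ne t 0 with rfl | ht0
    · simp
    rw [factorization_mul (pow_ne_zero 2 hr) ht0, factorization_pow, Finsupp.add_apply,
      factorization_eq_zero_of_not_dvd (ht p hp hPp)]
    simp
  · intro hn
    rcases eq_or_ne n 0 with rfl | hn0
    · exact ⟨0, 1, by simp, fun p hp _ => hp.not_dvd_one⟩
    obtain ⟨t, r, rfl, ht⟩ := sq_mul_squarefree n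
    refine ⟨r, t, rfl, fun p hp hPp hpt => ?_⟩
    have hr : r ≠ 0 := by rintro rfl; simp at hn0
    have ht1 : t.factorization p = 1 :=
      (ht.natFactorization_le_one p).antisymm ((hp.dvd_iff_one_le_factorization ht.ne_zero).mp hpt)
    have := hn p hp hPp
    rw [factorization_mul (pow_ne_zero 2 hr) ht.ne_zero, factorization_pow, Finsupp.add_apply,
      ht1] at this
    simp at this

theorem Real.eq_natCast_mul_sqrt_of_sq_eq {b : ℝ} (hb : 0 ≤ b) {r t : ℕ}
    (h : b ^ 2 = ((r ^ 2 * t : ℕ) : ℝ)) : b = r * √t := by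
  rw [← Real.sqrt_sq hb, h]
  push_cast
  rw [Real.sqrt_mul (by positivity), Real.sqrt_sq (by positivity)]

theorem sq_add_three_mul_sq_of_heron {a b c n : ℝ}
    (h : 16 * (√3 / 4 * n) ^ 2 = (a + b + c) * (a + b - c) * (a - b + c) * (-a + b + c)) :
    (a ^ 2 + b ^ 2 - c ^ 2) ^ 2 + 3 * n ^ 2 = 4 * (a ^ 2 * b ^ 2) := by
  have h3 : √3 ^ 2 = 3 := Real.sq_sqrt zero_le_three
  linear_combination h - n ^ 2 * h3

theorem stmt_15_general (a b c : ℝ) (ha : 0 < a) (hb : 0 < b) (hc : 0 < c)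
    (A B C : ℕ) (hA : a ^ 2 = (A : ℝ)) (hB : b ^ 2 = (B : ℝ)) (hC : c ^ 2 = (C : ℝ))
    (n : ℕ)
    (harea : 16 * (Real.sqrt 3 / 4 * n) ^ 2 =
      (a + b + c) * (a + b - c) * (a - b + c) * (-a + b + c))
    (r t : ℕ) (hat : a = (r : ℝ) * Real.sqrt t)
    (ht : ∀ p : ℕ, p.Prime → p % 3 = 2 → ¬ p ∣ t) :
    (∃ r' t' : ℕ, b = (r' : ℝ) * Real.sqrt t' ∧ ∀ p : ℕ, p.Prime → p % 3 = 2 → ¬ p ∣ t') ∧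
    (∃ r' t' : ℕ, c = (r' : ℝ) * Real.sqrt t' ∧ ∀ p : ℕ, p.Prime → p % 3 = 2 → ¬ p ∣ t') := by
  have hAt : A = r ^ 2 * t := by
    have : (A : ℝ) = ((r ^ 2 * t : ℕ) : ℝ) := by
      rw [← hA, hat, mul_pow, Real.sq_sqrt t.cast_nonneg]
      push_cast
      rfl
    exact_mod_cast this
  have hA0 : A ≠ 0 := by rintro rfl; simp at hA; linarith
  have hevA := (Nat.exists_eq_sq_mul_iff_even_factorization _ A).mp ⟨r, t, hAt, ht⟩
  have side : ∀ (d : ℝ) (D : ℕ), 0 < d → d ^ 2 = D →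
      (∃ x : ℤ, x ^ 2 + 3 * n ^ 2 = 4 * (A * D : ℕ)) →
      ∃ r' t' : ℕ, d = r' * √t' ∧ ∀ p : ℕ, p.Prime → p % 3 = 2 → ¬ p ∣ t' := by
    rintro d D hd hD ⟨x, hx⟩
    obtain ⟨r', t', hDrt, ht'⟩ := (Nat.exists_eq_sq_mul_iff_even_factorization _ D).mpr
      fun p hp hp3 => Nat.even_factorization_of_even_factorization_mul hA0
        (Nat.even_factorization_of_sq_add_three_mul_sq_eq hp hp3 hx) (hevA p hp hp3)
    exact ⟨r', t', Real.eq_natCast_mul_sqrt_of_sq_eq hd.le (hDrt ▸ hD), ht'⟩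
  have heronB := sq_add_three_mul_sq_of_heron harea
  have heronC := sq_add_three_mul_sq_of_heron (a := a) (b := c) (c := b) (n := n)
    (by linear_combination harea)
  rw [hA, hB, hC] at heronB heronC
  exact ⟨side b B hb hB ⟨A + B - C, by exact_mod_cast heronB⟩,
    side c C hc hC ⟨A + C - B, by exact_mod_cast heronC⟩⟩

theorem stmt_15 (a b c : ℝ) (ha : 0 < a) (hb : 0 < b) (hc : 0 < c)
    (hab : c < a + b) (hbc : a < b + c) (hac : b < a + c)
    (A B C : ℕ) (hA : a ^ 2 = (A : ℝ)) (hB : b ^ 2 = (B : ℝ)) (hC : c ^ 2 = (C : ℝ))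
    (n : ℕ)
    (harea : 16 * (Real.sqrt 3 / 4 * n) ^ 2 =
      (a + b + c) * (a + b - c) * (a - b + c) * (-a + b + c))
    (r t : ℕ) (hat : a = (r : ℝ) * Real.sqrt t)
    (ht : ∀ p : ℕ, p.Prime → p % 3 = 2 → ¬ p ∣ t) :
    (∃ r' t' : ℕ, b = (r' : ℝ) * Real.sqrt t' ∧ ∀ p : ℕ, p.Prime → p % 3 = 2 → ¬ p ∣ t') ∧
    (∃ r' t' : ℕ, c = (r' : ℝ) * Real.sqrt t' ∧ ∀ p : ℕ, p.Prime → p % 3 = 2 → ¬ p ∣ t') :=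
  stmt_15_general a b c ha hb hc A B C hA hB hC n harea r t hat ht
end
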